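/- Every diversity (X, δ) can be embedded in a complete diversity with dense image: there exist a complete diversity (X̂, δ̂) and an injective map π : X → X̂ with δ(A) = δ̂(π(A)) for every finite A ⊆ X, such that every point of X̂ is the limit (in the diversity sense) of a sequence of points of π(X). -/

import Mathlib

/-- A diversity on `X`: a real-valued function on finite subsets of `X` that is
nonnegative, vanishes exactly on sets with at most one element, and satisfies
the triangle inequality `δ(A ∪ B) ≤ δ(A ∪ C) + δ(C ∪ B)` for nonempty `C`. -/
structure Diversity (X : Type*) [DecidableEq X] where
  δ : Finset X → ℝ
  nonneg : ∀ A : Finset X, 0 ≤ δ A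
  eq_zero_iff : ∀ A : Finset X, δ A = 0 ↔ A.card ≤ 1
  triangle : ∀ A B C : Finset X, C.Nonempty → δ (A ∪ B) ≤ δ (A ∪ C) + δ (C ∪ B)

/-- A sequence `x` converges to `p` in the diversity sense: for every `ε > 0`
there is `N` such that `δ({p} ∪ {x_{i₁}, …, x_{iₙ}}) < ε` for all finite sets of
indices `i₁, …, iₙ ≥ N`. -/
def DivTendsto {X : Type*} [DecidableEq X] (δ : Finset X → ℝ) (x : ℕ → X) (p : X) : Prop :=
  ∀ ε > (0 : ℝ), ∃ N : ℕ, ∀ I : Finset ℕ, (∀ i ∈ I, N ≤ i) →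
    δ (insert p (I.image x)) < ε

/-- A sequence `x` is Cauchy in the diversity sense: for every `ε > 0` there is
`N` such that `δ({x_{i₁}, …, x_{iₙ}}) < ε` for all finite sets of indices
`i₁, …, iₙ ≥ N`. -/
def DivCauchy {X : Type*} [DecidableEq X] (δ : Finset X → ℝ) (x : ℕ → X) : Prop :=
  ∀ ε > (0 : ℝ), ∃ N : ℕ, ∀ I : Finset ℕ, (∀ i ∈ I, N ≤ i) →
    δ (I.image x) < ε

universe u

/-!
Complete `X` by diversity-Cauchy sequences modulo `δ {x n, y n} → 0`, and let `δ̂ A` be the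
limit of `δ` applied to the `n`-th terms of representatives of the points of `A`. Everything
rests on one consequence of the triangle inequality: replacing the points `f k` of a set by
points `g k` changes `δ` by at most `∑ δ {f k, g k}`. It makes `δ̂` well defined and shows that
sequences at summable pairwise distance have the same Cauchy and limit behaviour; completeness
then follows by approximating the `k`-th term of a Cauchy sequence in the completion within
`2⁻ᵏ` by a point of `X`.
-/

open Filter Topology

namespace Diversity

variable {X : Type*} [DecidableEq X] (D : Diversity X)

@[simp]
theorem δ_singleton (x : X) : D.δ {x} = 0 :=
  (D.eq_zero_iff {x}).2 (Finset.card_singleton x).le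

theorem δ_le_δ_insert (B : Finset X) (c : X) : D.δ B ≤ D.δ (insert c B) := by
  simpa [Finset.union_comm B] using D.triangle B ∅ {c} (Finset.singleton_nonempty c)

theorem δ_le_δ_union (A s : Finset X) : D.δ A ≤ D.δ (A ∪ s) := by
  induction s using Finset.induction_on with
  | empty => simp
  | insert c s _ ih => exact ih.trans (by rw [Finset.union_insert]; exact D.δ_le_δ_insert _ c)

theorem δ_mono {A B : Finset X} (h : A ⊆ B) : D.δ A ≤ D.δ B :=
  Finset.union_eq_right.2 h ▸ D.δ_le_δ_union A B

theorem δ_insert_le (B : Finset X) (x y : X) :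
    D.δ (insert x B) ≤ D.δ (insert y B) + D.δ {x, y} := by
  simpa [← Finset.insert_eq, add_comm] using D.triangle {x} B {y} (Finset.singleton_nonempty y)

theorem δ_union_image_le {ι : Type*} [DecidableEq ι] (B : Finset X) (K : Finset ι)
    (f g : ι → X) :
    D.δ (B ∪ K.image f) ≤ D.δ (B ∪ K.image g) + ∑ k ∈ K, D.δ {f k, g k} := by
  induction K using Finset.induction_on generalizing B with
  | empty => simp
  | insert a K ha ih =>
    rw [Finset.image_insert, Finset.image_insert, Finset.union_insert, Finset.union_insert,
      Finset.sum_insert ha]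
    calc D.δ (insert (f a) (B ∪ K.image f))
        ≤ D.δ (insert (g a) B ∪ K.image f) + D.δ {f a, g a} := by
          rw [Finset.insert_union]; exact D.δ_insert_le _ _ _
      _ ≤ D.δ (insert (g a) B ∪ K.image g) + ∑ k ∈ K, D.δ {f k, g k} + D.δ {f a, g a} := by
          gcongr; exact ih _
      _ = _ := by rw [Finset.insert_union]; ring

theorem abs_δ_image_sub_le {ι : Type*} [DecidableEq ι] (K : Finset ι) (f g : ι → X) :
    |D.δ (K.image f) - D.δ (K.image g)| ≤ ∑ k ∈ K, D.δ {f k, g k} := by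
  have hfg := D.δ_union_image_le ∅ K f g
  have hgf := D.δ_union_image_le ∅ K g f
  rw [Finset.sum_congr rfl fun k _ => by rw [Finset.pair_comm]] at hgf
  simp only [Finset.empty_union] at hfg hgf
  rw [abs_sub_le_iff]
  constructor <;> linarith

end Diversity

section Sequences

variable {X : Type*} [DecidableEq X]

theorem Summable.exists_sum_lt {r : ℕ → ℝ} (hr : Summable r) {ε : ℝ} (hε : 0 < ε) :
    ∃ N, ∀ K : Finset ℕ, (∀ k ∈ K, N ≤ k) → ∑ k ∈ K, r k < ε := by
  obtain ⟨s, hs⟩ := hr.vanishing (Iio_mem_nhds hε)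
  obtain ⟨N, hN⟩ := s.exists_nat_subset_range
  exact ⟨N, fun K hK => hs K (Finset.disjoint_left.2 fun k hkK hks =>
    (hK k hkK).not_gt (Finset.mem_range.1 (hN hks)))⟩

theorem DivCauchy.tendsto_δ_pair (D : Diversity X) {x : ℕ → X} (hx : DivCauchy D.δ x) :
    Tendsto (fun p : ℕ × ℕ => D.δ {x p.1, x p.2}) atTop (𝓝 0) := by
  refine Metric.tendsto_atTop.2 fun ε hε => ?_
  obtain ⟨N, hN⟩ := hx ε hε
  refine ⟨(N, N), fun p hp => ?_⟩
  rw [Real.dist_0_eq_abs, abs_of_nonneg (D.nonneg _)]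
  simpa [Finset.image_insert] using hN {p.1, p.2} (by simp [hp.1, hp.2])

theorem DivTendsto.exists_δ_pair_lt {δ : Finset X → ℝ} {w : ℕ → X} {p : X}
    (hw : DivTendsto δ w p) {ε : ℝ} (hε : 0 < ε) : ∃ n, δ {p, w n} < ε := by
  obtain ⟨N, hN⟩ := hw ε hε
  exact ⟨N, by simpa using hN {N} (by simp)⟩

theorem DivCauchy.of_comp {Y : Type*} [DecidableEq Y] {δ : Finset X → ℝ} {δ' : Finset Y → ℝ}
    {π : X → Y} (hπ : ∀ A, δ A = δ' (A.image π)) {x : ℕ → X}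
    (hx : DivCauchy δ' fun n => π (x n)) : DivCauchy δ x := by
  intro ε hε
  obtain ⟨N, hN⟩ := hx ε hε
  exact ⟨N, fun I hI => by rw [hπ, Finset.image_image]; exact hN I hI⟩

theorem DivCauchy.of_summable_δ_pair (E : Diversity X) {y w : ℕ → X} (hy : DivCauchy E.δ y)
    (hyw : Summable fun k => E.δ {y k, w k}) : DivCauchy E.δ w := by
  intro ε hε
  obtain ⟨N₁, hN₁⟩ := hy (ε / 2) (half_pos hε)
  obtain ⟨N₂, hN₂⟩ := hyw.exists_sum_lt (half_pos hε)
  refine ⟨max N₁ N₂, fun K hK => ?_⟩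
  have hwy := E.δ_union_image_le ∅ K w y
  rw [Finset.sum_congr rfl fun k _ => by rw [Finset.pair_comm]] at hwy
  simp only [Finset.empty_union] at hwy
  linarith [hN₁ K fun k hk => (le_max_left _ _).trans (hK k hk),
    hN₂ K fun k hk => (le_max_right _ _).trans (hK k hk)]

theorem DivTendsto.of_summable_δ_pair (E : Diversity X) {y w : ℕ → X} {p : X}
    (hw : DivTendsto E.δ w p) (hyw : Summable fun k => E.δ {y k, w k}) : DivTendsto E.δ y p := by
  intro ε hε
  obtain ⟨N₁, hN₁⟩ := hw (ε / 2) (half_pos hε)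
  obtain ⟨N₂, hN₂⟩ := hyw.exists_sum_lt (half_pos hε)
  refine ⟨max N₁ N₂, fun K hK => ?_⟩
  have hyw := E.δ_union_image_le {p} K y w
  rw [← Finset.insert_eq, ← Finset.insert_eq] at hyw
  linarith [hN₁ K fun k hk => (le_max_left _ _).trans (hK k hk),
    hN₂ K fun k hk => (le_max_right _ _).trans (hK k hk)]

end Sequences

namespace Diversity

variable {X : Type*} [DecidableEq X] (D : Diversity X)

def CauchySeqs : Type _ := {x : ℕ → X // DivCauchy D.δ x}

instance cauchySetoid : Setoid D.CauchySeqs where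
  r x y := Tendsto (fun n => D.δ {x.1 n, y.1 n}) atTop (𝓝 0)
  iseqv := {
    refl := fun x => by simp
    symm := fun h => by simpa only [Finset.pair_comm] using h
    trans := fun {x y z} hxy hyz => by
      have hsum := hxy.add hyz
      rw [add_zero] at hsum
      refine squeeze_zero (fun n => D.nonneg _) (fun n => ?_) hsum
      linarith [D.δ_insert_le {z.1 n} (x.1 n) (y.1 n)] }

abbrev Completion : Type _ := Quotient D.cauchySetoid

noncomputable instance : DecidableEq D.Completion := Classical.decEq _

noncomputable def completionδ (A : Finset D.Completion) : ℝ :=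
  limUnder atTop fun n => D.δ (A.image fun c => c.out.1 n)

theorem tendsto_completionδ (A : Finset D.Completion) :
    Tendsto (fun n => D.δ (A.image fun c => c.out.1 n)) atTop (𝓝 (D.completionδ A)) := by
  refine CauchySeq.tendsto_limUnder (cauchySeq_iff_tendsto_dist_atTop_0.2 ?_)
  have h := tendsto_finsetSum A fun c _ => c.out.2.tendsto_δ_pair D
  rw [Finset.sum_const_zero] at h
  exact squeeze_zero (fun _ => dist_nonneg)
    (fun p => (Real.dist_eq _ _).trans_le (D.abs_δ_image_sub_le A _ _)) h

theorem tendsto_δ_image_mk {ι : Type*} [DecidableEq ι] (K : Finset ι) (s : ι → D.CauchySeqs) :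
    Tendsto (fun n => D.δ (K.image fun i => (s i).1 n)) atTop
      (𝓝 (D.completionδ (K.image fun i => ⟦s i⟧))) := by
  refine (D.tendsto_completionδ _).congr_dist ?_
  have h := tendsto_finsetSum K fun i _ => Quotient.mk_out (s := D.cauchySetoid) (s i)
  rw [Finset.sum_const_zero] at h
  refine squeeze_zero (fun _ => dist_nonneg) (fun n => ?_) h
  rw [Finset.image_image]
  exact (Real.dist_eq _ _).trans_le (D.abs_δ_image_sub_le K _ _)

theorem completionδ_nonneg (A : Finset D.Completion) : 0 ≤ D.completionδ A :=
  ge_of_tendsto' (D.tendsto_completionδ A) fun _ => D.nonneg _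

theorem completionδ_triangle (A B C : Finset D.Completion) (hC : C.Nonempty) :
    D.completionδ (A ∪ B) ≤ D.completionδ (A ∪ C) + D.completionδ (C ∪ B) :=
  le_of_tendsto_of_tendsto' (D.tendsto_completionδ _)
    ((D.tendsto_completionδ _).add (D.tendsto_completionδ _)) fun n => by
      simpa only [Finset.image_union] using D.triangle _ _ _ (hC.image _)

theorem completionδ_eq_zero_iff (A : Finset D.Completion) :
    D.completionδ A = 0 ↔ A.card ≤ 1 := by
  refine ⟨fun h => Finset.card_le_one.2 fun c hc c' hc' => ?_, fun h => ?_⟩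
  · rw [← Quotient.out_equiv_out]
    refine squeeze_zero (fun n => D.nonneg _) (fun n => D.δ_mono ?_) (h ▸ D.tendsto_completionδ A)
    exact Finset.insert_subset (Finset.mem_image_of_mem _ hc)
      (Finset.singleton_subset_iff.2 (Finset.mem_image_of_mem _ hc'))
  · have hzero : ∀ n, D.δ (A.image fun c => c.out.1 n) = 0 := fun n =>
      (D.eq_zero_iff _).2 (Finset.card_image_le.trans h)
    exact tendsto_nhds_unique (D.tendsto_completionδ A)
      (by simpa only [hzero] using tendsto_const_nhds)

noncomputable def completion : Diversity D.Completion where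
  δ := D.completionδ
  nonneg := D.completionδ_nonneg
  eq_zero_iff := D.completionδ_eq_zero_iff
  triangle := D.completionδ_triangle

theorem divCauchy_const (a : X) : DivCauchy D.δ fun _ => a := fun ε hε =>
  ⟨0, fun I _ => by
    have hcard : (I.image fun _ => a).card ≤ 1 := Finset.card_le_one.2 (by simp)
    rwa [(D.eq_zero_iff _).2 hcard]⟩

noncomputable def toCompletion (a : X) : D.Completion := ⟦⟨fun _ => a, D.divCauchy_const a⟩⟧

theorem completionδ_image_toCompletion (A : Finset X) :
    D.completionδ (A.image D.toCompletion) = D.δ A := by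
  have h := D.tendsto_δ_image_mk A fun a => ⟨fun _ => a, D.divCauchy_const a⟩
  simp only [Finset.image_id'] at h
  exact tendsto_nhds_unique h tendsto_const_nhds

theorem toCompletion_injective : Function.Injective D.toCompletion := by
  intro a b hab
  have hδ : D.δ {a, b} = D.completion.δ {D.toCompletion b} := by
    rw [← D.completionδ_image_toCompletion, Finset.image_insert, Finset.image_singleton, hab,
      Finset.pair_eq_singleton]
    rfl
  have hcard : ({a, b} : Finset X).card ≤ 1 :=
    (D.eq_zero_iff _).1 (hδ.trans ((D.completion.eq_zero_iff _).2 (Finset.card_singleton _).le))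
  exact Finset.card_le_one.1 hcard a (by simp) b (by simp)

theorem tendsto_δ_pair_mk (x y : D.CauchySeqs) :
    Tendsto (fun n => D.δ {x.1 n, y.1 n}) atTop (𝓝 (D.completionδ {⟦x⟧, ⟦y⟧})) := by
  classical
  simpa [Finset.image_insert] using D.tendsto_δ_image_mk {x, y} id

theorem tendsto_toCompletion (x : D.CauchySeqs) :
    DivTendsto D.completion.δ (fun n => D.toCompletion (x.1 n)) ⟦x⟧ := by
  intro ε hε
  obtain ⟨N, hN⟩ := x.2 (ε / 2) (half_pos hε)
  refine ⟨N, fun I hI => ?_⟩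
  have htail : D.completion.δ (insert (D.toCompletion (x.1 N))
      (I.image fun i => D.toCompletion (x.1 i))) < ε / 2 := by
    have h := D.completionδ_image_toCompletion ((insert N I).image x.1)
    rw [Finset.image_image, Finset.image_insert] at h
    exact h.trans_lt (hN _ (by simpa using hI))
  have hpair : D.completion.δ {⟦x⟧, D.toCompletion (x.1 N)} ≤ ε / 2 :=
    le_of_tendsto (D.tendsto_δ_pair_mk x ⟨fun _ => x.1 N, D.divCauchy_const _⟩)
      (eventually_atTop.2 ⟨N, fun n hn => by simpa using (hN {n, N} (by simp [hn])).le⟩)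
  linarith [D.completion.δ_insert_le (I.image fun i => D.toCompletion (x.1 i)) ⟦x⟧
    (D.toCompletion (x.1 N))]

theorem exists_tendsto_toCompletion (p : D.Completion) :
    ∃ x : ℕ → X, DivTendsto D.completion.δ (fun n => D.toCompletion (x n)) p :=
  ⟨p.out.1, by simpa only [Quotient.out_eq] using D.tendsto_toCompletion p.out⟩

theorem completion_complete (y : ℕ → D.Completion) (hy : DivCauchy D.completion.δ y) :
    ∃ p, DivTendsto D.completion.δ y p := by
  have happrox : ∀ k, ∃ a, D.completion.δ {y k, D.toCompletion a} < (1 / 2) ^ k := fun k => by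
    obtain ⟨x, hx⟩ := D.exists_tendsto_toCompletion (y k)
    obtain ⟨n, hn⟩ := hx.exists_δ_pair_lt (pow_pos one_half_pos k)
    exact ⟨x n, hn⟩
  choose x hx using happrox
  have hsum : Summable fun k => D.completion.δ {y k, D.toCompletion (x k)} :=
    summable_geometric_two.of_nonneg_of_le (fun k => D.completion.nonneg _) fun k => (hx k).le
  have hxC : DivCauchy D.δ x :=
    .of_comp (fun A => (D.completionδ_image_toCompletion A).symm) (hy.of_summable_δ_pair _ hsum)
  exact ⟨⟦⟨x, hxC⟩⟧, (D.tendsto_toCompletion ⟨x, hxC⟩).of_summable_δ_pair _ hsum⟩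

end Diversity

/-- Every diversity embeds, with dense image, in a complete diversity: there is
a complete diversity `(Y, E)` and an injective map `π : X → Y` preserving the
diversity values, such that every point of `Y` is the limit (in the diversity
sense) of a sequence of points of `π(X)`. -/
theorem exists_complete_dense_embedding {X : Type u} [DecidableEq X] (D : Diversity X) :
    ∃ (Y : Type u) (instY : DecidableEq Y) (E : @Diversity Y instY) (π : X → Y),
      Function.Injective π ∧
      (∀ A : Finset X, D.δ A = E.δ (@Finset.image X Y instY π A)) ∧
      (∀ y : ℕ → Y, @DivCauchy Y instY E.δ y → ∃ p : Y, @DivTendsto Y instY E.δ y p) ∧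
      (∀ p : Y, ∃ x : ℕ → X, @DivTendsto Y instY E.δ (fun n => π (x n)) p) :=
  ⟨D.Completion, inferInstance, D.completion, D.toCompletion, D.toCompletion_injective,
    fun A => (D.completionδ_image_toCompletion A).symm, D.completion_complete,
    D.exists_tendsto_toCompletion⟩
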